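/- arXiv:1703.00682 — 2 statements merged into one kernel-verified Lean document; each statement's English description precedes it below -/
import Mathlib

section
/- Let ξ : [0,∞) → ℝ be continuous with ξ_0 = 0 and let (f_t) be the reverse Loewner flow driven by ξ, so that for each t ≥ 0 the map z ↦ f_t(z) is holomorphic and injective on ℍ with f_t(ℍ) ⊆ ℍ. Then for every t ≥ 0 and every y > 0, |f_t'(iy)| ≤ (4/y)·√(4t + y²), where f_t'(iy) denotes the complex derivative of f_t at iy. -/
/-
Two estimates combine. For holomorphic `g : ℍ → ℍ`, the Cayley map
`w ↦ (w - g z) / (w - conj (g z))` sends `g(ℍ)` into the unit disc, so the Cauchy estimate on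
the disc `ball z (Im z) ⊆ ℍ` gives `|g'(z)| ≤ 2 Im g(z) / Im z`. Along the flow,
`∂ₜ Im fₜ(z) = -Im (2 / fₜ(z)) = 2 Im fₜ / |fₜ|²`, so `∂ₜ (Im fₜ(z))² ≤ 4` and `Im fₜ(z) ≤ √(4t + (Im z)²)`.
-/

noncomputable section

/-- The open upper half-plane `ℍ = {z ∈ ℂ : Im z > 0}`. -/
def UHP : Set ℂ := {z : ℂ | 0 < z.im}

/-- `IsReverseLoewnerFlow ξ f` asserts that `f` is the reverse Loewner flow driven by `ξ`:
for each `z ∈ ℍ`, `t ↦ f t z` is an `ℍ`-valued continuous solution of the integral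
equation `f_t(z) = z − ∫_0^t 2/f_s(z) ds − ξ_t` for all `t ≥ 0`. -/
structure IsReverseLoewnerFlow (ξ : ℝ → ℝ) (f : ℝ → ℂ → ℂ) : Prop where
  mem : ∀ z ∈ UHP, ∀ t : ℝ, 0 ≤ t → f t z ∈ UHP
  cont : ∀ z ∈ UHP, ContinuousOn (fun t => f t z) (Set.Ici 0)
  eqn : ∀ z ∈ UHP, ∀ t : ℝ, 0 ≤ t →
    f t z = z - (∫ s in (0:ℝ)..t, 2 / f s z) - ξ t

open Complex ComplexConjugate Set Metric

theorem isOpen_UHP : IsOpen UHP := isOpen_lt continuous_const continuous_im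

theorem ball_im_subset_UHP (z : ℂ) : ball z z.im ⊆ UHP := fun w hw => by
  have hlt : |(w - z).im| < z.im := (abs_im_le_norm _).trans_lt (mem_ball_iff_norm.1 hw)
  have := (abs_lt.1 hlt).1
  simp only [sub_im] at this
  show 0 < w.im
  linarith

theorem norm_sub_lt_norm_sub_conj {w a : ℂ} (hw : w ∈ UHP) (ha : a ∈ UHP) :
    ‖w - a‖ < ‖w - conj a‖ := by
  have hw : 0 < w.im := hw
  have ha : 0 < a.im := ha
  rw [← sq_lt_sq₀ (norm_nonneg _) (norm_nonneg _), Complex.sq_norm, Complex.sq_norm,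
    normSq_apply, normSq_apply]
  simp only [sub_re, sub_im, conj_re, conj_im]
  nlinarith

theorem norm_deriv_le_of_mapsTo_UHP {g : ℂ → ℂ} (hg : DifferentiableOn ℂ g UHP)
    (hmaps : MapsTo g UHP UHP) {z : ℂ} (hz : z ∈ UHP) :
    ‖deriv g z‖ ≤ 2 * (g z).im / z.im := by
  set a := g z
  have ha : 0 < a.im := hmaps hz
  have hconj : ∀ w ∈ UHP, g w - conj a ≠ 0 := fun w hw h => by
    have : (g w).im = -a.im := by simpa using congrArg im (sub_eq_zero.1 h)
    have hgw : 0 < (g w).im := hmaps hw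
    linarith
  set h : ℂ → ℂ := fun w => (g w - a) / (g w - conj a)
  have hh : DifferentiableOn ℂ h (ball z z.im) :=
    ((hg.sub_const a).div (hg.sub_const _) hconj).mono (ball_im_subset_UHP z)
  have hmaps_h : MapsTo h (ball z z.im) (closedBall (h z) 1) := fun w hw => by
    have hw := ball_im_subset_UHP z hw
    simp only [h, a, sub_self, zero_div, mem_closedBall_zero_iff, norm_div]
    exact div_le_one_of_le₀ (norm_sub_lt_norm_sub_conj (hmaps hw) ha).le (norm_nonneg _)
  have hderiv : deriv h z = deriv g z / (a - conj a) := by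
    have hgz := (hg.differentiableAt (isOpen_UHP.mem_nhds hz)).hasDerivAt
    rw [((hgz.sub_const a).fun_div (hgz.sub_const _) (hconj z hz)).deriv]
    rw [sub_self, zero_mul, sub_zero, sq, mul_div_mul_right _ _ (hconj z hz)]
  have hcauchy := norm_deriv_le_div_of_mapsTo_ball hh hmaps_h (show 0 < z.im from hz)
  rw [hderiv, norm_div, sub_conj, norm_mul, norm_I, mul_one, norm_real,
    Real.norm_of_nonneg (by positivity), div_le_div_iff₀ (by positivity) hz, one_mul] at hcauchy
  rwa [le_div_iff₀ (show 0 < z.im from hz)]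

theorem sq_le_sq_add_of_mul_hasDerivAt_le {u u' : ℝ → ℝ} {a b C : ℝ} (hab : a ≤ b)
    (hu : ContinuousOn u (Icc a b)) (hu' : ∀ s ∈ Ioo a b, HasDerivAt u (u' s) s)
    (hle : ∀ s ∈ Ioo a b, u s * u' s ≤ C) : u b ^ 2 ≤ u a ^ 2 + 2 * C * (b - a) := by
  rw [← interior_Icc] at hu' hle
  have hsq : ∀ s ∈ interior (Icc a b), HasDerivAt (fun s => u s ^ 2) (2 * u s * u' s) s :=
    fun s hs => by simpa using (hu' s hs).fun_pow 2
  have := (convex_Icc a b).image_sub_le_mul_sub_of_deriv_le (f := fun s => u s ^ 2) (C := 2 * C)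
    (hu.pow 2)
    (fun s hs => (hsq s hs).differentiableAt.differentiableWithinAt)
    (fun s hs => by rw [(hsq s hs).deriv, mul_assoc]; linarith [hle s hs])
    a (left_mem_Icc.2 hab) b (right_mem_Icc.2 hab) hab
  linarith

theorem neg_im_two_div_mul_im_le (w : ℂ) : -(2 / w).im * w.im ≤ 2 := by
  rcases eq_or_ne w 0 with rfl | hw
  · simp
  have hpos : 0 < normSq w := normSq_pos.2 hw
  have hle : w.im ^ 2 ≤ normSq w := by rw [normSq_apply]; nlinarith [sq_nonneg w.re]
  rw [div_im]
  simp only [re_ofNat, im_ofNat, zero_mul, zero_div]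
  rw [show -(0 - 2 * w.im / normSq w) * w.im = 2 * (w.im ^ 2 / normSq w) by ring]
  linarith [(div_le_one hpos).2 hle]

namespace IsReverseLoewnerFlow

theorem ne_zero {ξ : ℝ → ℝ} {f : ℝ → ℂ → ℂ} (hf : IsReverseLoewnerFlow ξ f) {z : ℂ}
    (hz : z ∈ UHP) {t : ℝ} (ht : 0 ≤ t) : f t z ≠ 0 := fun h => by
  simpa [UHP, h] using hf.mem z hz t ht

theorem continuousOn_two_div {ξ : ℝ → ℝ} {f : ℝ → ℂ → ℂ} (hf : IsReverseLoewnerFlow ξ f) {z : ℂ}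
    (hz : z ∈ UHP) : ContinuousOn (fun s => 2 / f s z) (Ici 0) :=
  continuousOn_const.div (hf.cont z hz) fun _ hs => hf.ne_zero hz hs

theorem im_eq {ξ : ℝ → ℝ} {f : ℝ → ℂ → ℂ} (hf : IsReverseLoewnerFlow ξ f) {z : ℂ}
    (hz : z ∈ UHP) {t : ℝ} (ht : 0 ≤ t) :
    (f t z).im = z.im - ∫ s in (0 : ℝ)..t, (2 / f s z).im := by
  have hint : IntervalIntegrable (fun s => 2 / f s z) MeasureTheory.volume 0 t :=
    ((hf.continuousOn_two_div hz).mono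
      (by rw [uIcc_of_le ht]; exact Icc_subset_Ici_self)).intervalIntegrable
  rw [hf.eqn z hz t ht]
  simp only [sub_im, ofReal_im, sub_zero]
  congr 1
  exact (imCLM.intervalIntegral_comp_comm hint).symm

theorem hasDerivAt_im {ξ : ℝ → ℝ} {f : ℝ → ℂ → ℂ} (hf : IsReverseLoewnerFlow ξ f) {z : ℂ}
    (hz : z ∈ UHP) {t : ℝ} (ht : 0 < t) :
    HasDerivAt (fun s => (f s z).im) (-(2 / f t z).im) t := by
  have hcont : ContinuousOn (fun s => (2 / f s z).im) (Ici 0) :=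
    continuous_im.comp_continuousOn (hf.continuousOn_two_div hz)
  have hFTC : HasDerivAt (fun s => ∫ r in (0 : ℝ)..s, (2 / f r z).im) (2 / f t z).im t :=
    intervalIntegral.integral_hasDerivAt_right
      (hcont.mono (by rw [uIcc_of_le ht.le]; exact Icc_subset_Ici_self)).intervalIntegrable
      ((hcont.mono Ioi_subset_Ici_self).stronglyMeasurableAtFilter isOpen_Ioi t ht)
      (hcont.continuousAt (Ici_mem_nhds ht))
  exact (hFTC.const_sub z.im).congr_of_eventuallyEq
    (Filter.eventuallyEq_of_mem (Ici_mem_nhds ht) fun s hs => hf.im_eq hz hs)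

theorem im_le_sqrt {ξ : ℝ → ℝ} (hξ0 : ξ 0 = 0) {f : ℝ → ℂ → ℂ} (hf : IsReverseLoewnerFlow ξ f)
    {z : ℂ} (hz : z ∈ UHP) {t : ℝ} (ht : 0 ≤ t) :
    (f t z).im ≤ √(4 * t + z.im ^ 2) := by
  have hf0 : f 0 z = z := by simpa [hξ0] using hf.eqn z hz 0 le_rfl
  have hsq := sq_le_sq_add_of_mul_hasDerivAt_le ht
    (continuous_im.comp_continuousOn ((hf.cont z hz).mono Icc_subset_Ici_self))
    (fun s hs => hf.hasDerivAt_im hz hs.1)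
    (fun s _ => by rw [mul_comm]; exact neg_im_two_div_mul_im_le _)
  simp only [Function.comp_apply, hf0, sub_zero] at hsq
  exact Real.le_sqrt_of_sq_le (by linarith)

end IsReverseLoewnerFlow

theorem reverse_flow_deriv_bound_general
    (ξ : ℝ → ℝ) (hξ0 : ξ 0 = 0)
    (f : ℝ → ℂ → ℂ) (hrev : IsReverseLoewnerFlow ξ f)
    (hholo : ∀ t : ℝ, 0 ≤ t → DifferentiableOn ℂ (f t) UHP) :
    ∀ t : ℝ, 0 ≤ t → ∀ y : ℝ, 0 < y →
      ‖deriv (f t) (Complex.I * y)‖ ≤ (4 / y) * Real.sqrt (4 * t + y ^ 2) := by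
  intro t ht y hy
  have hz : I * y ∈ UHP := by simpa [UHP] using hy
  have hzim : (I * y).im = y := by simp
  calc ‖deriv (f t) (I * y)‖
      ≤ 2 * (f t (I * y)).im / y :=
        (norm_deriv_le_of_mapsTo_UHP (hholo t ht) (fun w hw => hrev.mem w hw t ht) hz).trans_eq
          (by rw [hzim])
    _ ≤ 2 * √(4 * t + y ^ 2) / y := by
        gcongr
        simpa [hzim] using hrev.im_le_sqrt hξ0 hz ht
    _ ≤ 4 / y * √(4 * t + y ^ 2) := by
        rw [div_mul_eq_mul_div]
        gcongr
        norm_num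

/-- **Corollary (derivative bound for the reverse flow).** Let `(f_t)` be the reverse
Loewner flow driven by a continuous `ξ` with `ξ_0 = 0`, such that each `f_t` is
holomorphic and injective on `ℍ` with `f_t(ℍ) ⊆ ℍ`.  Then for every `t ≥ 0` and `y > 0`,
`|f_t'(iy)| ≤ (4/y)·√(4t + y²)`. -/
theorem reverse_flow_deriv_bound
    (ξ : ℝ → ℝ) (hξc : Continuous ξ) (hξ0 : ξ 0 = 0)
    (f : ℝ → ℂ → ℂ) (hrev : IsReverseLoewnerFlow ξ f)
    (hholo : ∀ t : ℝ, 0 ≤ t → DifferentiableOn ℂ (f t) UHP)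
    (hinj : ∀ t : ℝ, 0 ≤ t → Set.InjOn (f t) UHP) :
    ∀ t : ℝ, 0 ≤ t → ∀ y : ℝ, 0 < y →
      ‖deriv (f t) (Complex.I * y)‖ ≤ (4 / y) * Real.sqrt (4 * t + y ^ 2) :=
  reverse_flow_deriv_bound_general ξ hξ0 f hrev hholo
end
end

section
/- Let ξ : [0,∞) → ℝ be continuous with ξ_0 = 0, fix y > 0, and let Z : [0,∞) → ℍ be continuous with Z_t = iy − ∫_0^t 2/Z_s ds − ξ_t for all t ≥ 0 (i.e., Z_t = f_t(iy) for the reverse Loewner flow driven by ξ). Then for every t ≥ 0, |Re(Z_t)| ≤ 2·sup_{0≤s≤t} |ξ_s|. -/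
noncomputable section

open MeasureTheory Set

/-- **Lemma (real part bound for the reverse flow).** Let `ξ` be continuous with
`ξ_0 = 0`, fix `y > 0`, and let `Z_t = f_t(iy)` be the ℍ-valued solution of
`Z_t = iy − ∫_0^t 2/Z_s ds − ξ_t`.  Then `|Re Z_t| ≤ 2·sup_{0≤s≤t} |ξ_s|` for all
`t ≥ 0`. -/
theorem reverse_flow_re_bound
    (ξ : ℝ → ℝ) (hξc : Continuous ξ) (hξ0 : ξ 0 = 0)
    (y : ℝ) (hy : 0 < y)
    (Z : ℝ → ℂ) (hZc : Continuous Z)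
    (hZH : ∀ t : ℝ, 0 ≤ t → Z t ∈ UHP)
    (hZ : ∀ t : ℝ, 0 ≤ t → Z t = Complex.I * y - (∫ s in (0:ℝ)..t, 2 / Z s) - ξ t) :
    ∀ t : ℝ, 0 ≤ t → |(Z t).re| ≤ 2 * sSup ((fun s => |ξ s|) '' Set.Icc 0 t) := by
  intro t ht
  obtain ⟨M, hMdef⟩ : ∃ M : ℝ, M = sSup ((fun s => |ξ s|) '' Set.Icc 0 t) := ⟨_, rfl⟩
  rw [← hMdef]
  have hbdd : BddAbove ((fun s => |ξ s|) '' Set.Icc 0 t) :=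
    (isCompact_Icc.image (by continuity)).bddAbove
  have hMle : ∀ s ∈ Set.Icc (0:ℝ) t, |ξ s| ≤ M := fun s hs => hMdef ▸ le_csSup hbdd ⟨s, hs, rfl⟩
  have hM0 : 0 ≤ M := le_trans (abs_nonneg _) (hMle 0 ⟨le_rfl, ht⟩)
  have hZne : ∀ s : ℝ, 0 ≤ s → Z s ≠ 0 := by
    intro s hs h0
    have h := hZH s hs
    rw [h0] at h
    simp [UHP] at h
  obtain ⟨g, hgdef⟩ : ∃ g : ℝ → ℝ, g = fun s => (Z s).re + ξ s := ⟨_, rfl⟩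
  have hgc : Continuous g := by rw [hgdef]; exact (Complex.continuous_re.comp hZc).add hξc
  have hg0 : g 0 = 0 := by
    have h := hZ 0 le_rfl
    simp only [intervalIntegral.integral_same] at h
    have : (Z 0).re = -ξ 0 := by rw [h]; simp
    simp [hgdef, this, hξ0]
  have hcont : ContinuousOn (fun s => (2:ℂ) / Z s) (Set.Ici 0) :=
    continuousOn_const.div hZc.continuousOn (fun s hs => hZne s hs)
  have hint : ∀ a b : ℝ, 0 ≤ a → 0 ≤ b →
      IntervalIntegrable (fun s => (2:ℂ) / Z s) volume a b := by
    intro a b ha hb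
    apply (hcont.mono ?_).intervalIntegrable
    intro x hx
    exact le_trans (le_min ha hb) hx.1
  have hdiff : ∀ u v : ℝ, 0 ≤ u → 0 ≤ v →
      g v - g u = -∫ s in u..v, ((2:ℂ) / Z s).re := by
    intro u v hu hv
    have hsub : Z v - Z u = -(∫ s in u..v, (2:ℂ)/Z s) - (ξ v - ξ u) := by
      rw [hZ v hv, hZ u hu]
      rw [← intervalIntegral.integral_interval_sub_left (hint 0 v le_rfl hv) (hint 0 u le_rfl hu)]
      push_cast
      ring
    have hre : (∫ s in u..v, ((2:ℂ)/Z s)).re = ∫ s in u..v, ((2:ℂ)/Z s).re := by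
      have := ContinuousLinearMap.intervalIntegral_comp_comm Complex.reCLM (hint u v hu hv)
      simpa using this.symm
    have h2 := congrArg Complex.re hsub
    simp only [Complex.sub_re, Complex.neg_re, Complex.ofReal_re] at h2
    rw [hre] at h2
    simp only [hgdef]
    linarith
  -- key monotonicity lemmas
  have key₁ : ∀ u v : ℝ, 0 ≤ u → u ≤ v → (∀ s ∈ Set.Icc u v, 0 ≤ (Z s).re) → g v ≤ g u := by
    intro u v hu huv hpos
    have h1 : 0 ≤ ∫ s in u..v, ((2:ℂ)/Z s).re := by
      apply intervalIntegral.integral_nonneg huv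
      intro s hs
      rw [Complex.div_re]
      have := hpos s hs
      have h2 : (0:ℝ) ≤ Complex.normSq (Z s) := Complex.normSq_nonneg _
      simp only [Complex.re_ofNat, Complex.im_ofNat, zero_mul, zero_div, add_zero]
      positivity
    have := hdiff u v hu (hu.trans huv)
    linarith
  have key₂ : ∀ u v : ℝ, 0 ≤ u → u ≤ v → (∀ s ∈ Set.Icc u v, (Z s).re ≤ 0) → g u ≤ g v := by
    intro u v hu huv hneg
    have h1' : 0 ≤ ∫ s in u..v, -((2:ℂ)/Z s).re := by
      apply intervalIntegral.integral_nonneg huv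
      intro s hs
      rw [Complex.div_re]
      have := hneg s hs
      have h2 : (0:ℝ) ≤ Complex.normSq (Z s) := Complex.normSq_nonneg _
      simp only [Complex.re_ofNat, Complex.im_ofNat, zero_mul, zero_div, add_zero]
      have := div_nonpos_of_nonpos_of_nonneg (by linarith : 2 * (Z s).re ≤ 0) h2
      linarith
    have h1 : (∫ s in u..v, ((2:ℂ)/Z s).re) ≤ 0 := by
      rw [intervalIntegral.integral_neg] at h1'
      linarith
    have := hdiff u v hu (hu.trans huv)
    linarith
  -- upper bound for g
  have hub : ∀ r ∈ Set.Icc (0:ℝ) t, g r ≤ M := by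
    intro r hr
    by_contra hMr
    push_neg at hMr
    set S := {s : ℝ | s ∈ Set.Icc 0 r ∧ g s ≤ M} with hSdef
    have hScl : IsClosed S := isClosed_Icc.inter (isClosed_Iic.preimage hgc)
    have hSne : S.Nonempty := ⟨0, ⟨le_rfl, hr.1⟩, by rw [hg0]; exact hM0⟩
    have hSbd : BddAbove S := ⟨r, fun x hx => hx.1.2⟩
    set u := sSup S with hudef
    have huS : u ∈ S := hScl.csSup_mem hSne hSbd
    have hu0 : 0 ≤ u := huS.1.1
    have hur : u ≤ r := huS.1.2
    have hgt : ∀ s, u < s → s ≤ r → M < g s := by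
      intro s h1 h2
      by_contra h
      push_neg at h
      have : s ∈ S := ⟨⟨hu0.trans h1.le, h2⟩, h⟩
      exact absurd (le_csSup hSbd this) (not_le.2 h1)
    have hulr : u < r := lt_of_le_of_ne hur (fun h => absurd huS.2 (by rw [h]; exact not_le.2 hMr))
    have hgu : M ≤ g u := by
      have hnb : (nhdsWithin u (Set.Ioc u r)).NeBot := by
        rw [nhdsWithin_Ioc_eq_nhdsGT hulr]
        infer_instance
      have htd : Filter.Tendsto g (nhdsWithin u (Set.Ioc u r)) (nhds (g u)) :=
        (hgc.tendsto u).mono_left nhdsWithin_le_nhds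
      refine ge_of_tendsto htd ?_
      filter_upwards [self_mem_nhdsWithin] with s hs
      exact (hgt s hs.1 hs.2).le
    have hall : ∀ s ∈ Set.Icc u r, 0 ≤ (Z s).re := by
      intro s hs
      have hst : s ∈ Set.Icc (0:ℝ) t := ⟨hu0.trans hs.1, hs.2.trans hr.2⟩
      have hgs : M ≤ g s := by
        rcases eq_or_lt_of_le hs.1 with h | h
        · rwa [← h]
        · exact (hgt s h hs.2).le
      have hξs : ξ s ≤ M := le_trans (le_abs_self _) (hMle s hst)
      have : (Z s).re = g s - ξ s := by simp [hgdef]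
      linarith
    have := key₁ u r hu0 hur hall
    have := huS.2
    linarith
  -- lower bound for g
  have hlb : ∀ r ∈ Set.Icc (0:ℝ) t, -M ≤ g r := by
    intro r hr
    by_contra hMr
    push_neg at hMr
    set S := {s : ℝ | s ∈ Set.Icc 0 r ∧ -M ≤ g s} with hSdef
    have hScl : IsClosed S := isClosed_Icc.inter (isClosed_Ici.preimage hgc)
    have hSne : S.Nonempty := ⟨0, ⟨le_rfl, hr.1⟩, by rw [hg0]; linarith⟩
    have hSbd : BddAbove S := ⟨r, fun x hx => hx.1.2⟩
    set u := sSup S with hudef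
    have huS : u ∈ S := hScl.csSup_mem hSne hSbd
    have hu0 : 0 ≤ u := huS.1.1
    have hur : u ≤ r := huS.1.2
    have hgt : ∀ s, u < s → s ≤ r → g s < -M := by
      intro s h1 h2
      by_contra h
      push_neg at h
      have : s ∈ S := ⟨⟨hu0.trans h1.le, h2⟩, h⟩
      exact absurd (le_csSup hSbd this) (not_le.2 h1)
    have hulr : u < r := lt_of_le_of_ne hur (fun h => absurd huS.2 (by rw [h]; exact not_le.2 hMr))
    have hgu : g u ≤ -M := by
      have hnb : (nhdsWithin u (Set.Ioc u r)).NeBot := by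
        rw [nhdsWithin_Ioc_eq_nhdsGT hulr]
        infer_instance
      have htd : Filter.Tendsto g (nhdsWithin u (Set.Ioc u r)) (nhds (g u)) :=
        (hgc.tendsto u).mono_left nhdsWithin_le_nhds
      refine le_of_tendsto htd ?_
      filter_upwards [self_mem_nhdsWithin] with s hs
      exact (hgt s hs.1 hs.2).le
    have hall : ∀ s ∈ Set.Icc u r, (Z s).re ≤ 0 := by
      intro s hs
      have hst : s ∈ Set.Icc (0:ℝ) t := ⟨hu0.trans hs.1, hs.2.trans hr.2⟩
      have hgs : g s ≤ -M := by
        rcases eq_or_lt_of_le hs.1 with h | h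
        · rwa [← h]
        · exact (hgt s h hs.2).le
      have hξs : -M ≤ ξ s := neg_le_of_abs_le (hMle s hst)
      have : (Z s).re = g s - ξ s := by simp [hgdef]
      linarith
    have := key₂ u r hu0 hur hall
    have := huS.2
    linarith
  have h1 := hub t ⟨ht, le_rfl⟩
  have h2 := hlb t ⟨ht, le_rfl⟩
  have h3 := abs_le.mp (hMle t ⟨ht, le_rfl⟩)
  have h4 : (Z t).re = g t - ξ t := by simp [hgdef]
  rw [h4, abs_le]
  constructor <;> linarith [h3.1, h3.2]
end
end
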